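/- arXiv:2311.15300 — 2 statements merged into one kernel-verified Lean document; each statement's English description precedes it below -/
import Mathlib

section
/- There do not exist real numbers 0 ≤ ν₁ ≤ ν₂ ≤ ν₃ ≤ ν₄ such that all νᵢ ∈ (1/4)ℤ, all the pairwise differences νᵢ − νⱼ lie in (1/2)ℤ, and ν₁ + ν₄ < 1, ν₂ + ν₃ < 1, ν₂ + ν₄ > 1. -/
/-!
Scaled by 4, the νᵢ become integers `a ≤ b ≤ c ≤ d` with `0 ≤ a`. Integrality sharpens the
strict inequalities to `a + d ≤ 3`, `b + c ≤ 3` and `b + d ≥ 5`; the first and third give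
`b ≥ a + 2 ≥ 2`, hence `b + c ≥ 2b ≥ 4`, contradicting the second.
-/

theorem Int.false_of_add_bounds {a b c d : ℤ} (ha : 0 ≤ a) (hbc : b ≤ c)
    (had : a + d < 4) (hbc₄ : b + c < 4) (hbd : 4 < b + d) : False := by
  have hab : a + 2 ≤ b := by omega
  omega

/-- 4A₁ in E₈: there are no 0 ≤ ν₁ ≤ ν₂ ≤ ν₃ ≤ ν₄ in (1/4)ℤ with all pairwise
differences in (1/2)ℤ, such that ν₁ + ν₄ < 1, ν₂ + ν₃ < 1 and ν₂ + ν₄ > 1. -/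
theorem stmt_8 :
    ¬ ∃ ν₁ ν₂ ν₃ ν₄ : ℝ, 0 ≤ ν₁ ∧ ν₁ ≤ ν₂ ∧ ν₂ ≤ ν₃ ∧ ν₃ ≤ ν₄ ∧
      (∃ m : ℤ, ν₁ = m / 4) ∧ (∃ m : ℤ, ν₂ = m / 4) ∧
      (∃ m : ℤ, ν₃ = m / 4) ∧ (∃ m : ℤ, ν₄ = m / 4) ∧
      (∃ m : ℤ, ν₁ - ν₂ = m / 2) ∧ (∃ m : ℤ, ν₁ - ν₃ = m / 2) ∧
      (∃ m : ℤ, ν₁ - ν₄ = m / 2) ∧ (∃ m : ℤ, ν₂ - ν₃ = m / 2) ∧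
      (∃ m : ℤ, ν₂ - ν₄ = m / 2) ∧ (∃ m : ℤ, ν₃ - ν₄ = m / 2) ∧
      ν₁ + ν₄ < 1 ∧ ν₂ + ν₃ < 1 ∧ 1 < ν₂ + ν₄ := by
  rintro ⟨-, -, -, -, h₁, -, h₂₃, -, ⟨a, rfl⟩, ⟨b, rfl⟩, ⟨c, rfl⟩, ⟨d, rfl⟩,
    -, -, -, -, -, -, h₁₄, h₂₃', h₂₄⟩
  refine Int.false_of_add_bounds (a := a) (b := b) (c := c) (d := d) ?_ ?_ ?_ ?_ ?_
  · exact_mod_cast (by linarith : (0 : ℝ) ≤ a)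
  · exact_mod_cast (by linarith : (b : ℝ) ≤ c)
  · exact_mod_cast (by linarith : (a : ℝ) + d < 4)
  · exact_mod_cast (by linarith : (b : ℝ) + c < 4)
  · exact_mod_cast (by linarith : (4 : ℝ) < b + d)
end

section
/- Let a : ℤ × ℤ → ℕ be a function with finite support satisfying the symmetry a(i, i+j) = a(i, i−j) for all i, j ∈ ℤ. Define n_v(i) = Σ_k a(i, k) and n_u(i) = Σ_k a(k, i). Then exactly one of the following holds: (a) n_u(i) = a(i,i) = n_v(i) for all i ∈ ℤ; or (b) there exists i₀ ∈ ℤ such that n_u(i) = n_v(i) for all i > i₀ and n_u(i₀) > n_v(i₀). -/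
/-!
The symmetry `a (k, i) = a (k, 2k - i)` reflects row `k` about the diagonal, so an entry of
row `k` off the diagonal is matched by one strictly above it, in a column further from `k`.
If `a` vanishes strictly above the diagonal, it is therefore diagonal and (a) holds.
Otherwise let `i₀` be the largest column carrying a nonzero entry strictly above the
diagonal. Rows `i ≥ i₀` and columns `i > i₀` are then concentrated on the diagonal, so
`n_u(i) = a(i,i) = n_v(i)` for `i > i₀`, while column `i₀` has an extra entry above the
diagonal, so `n_v(i₀) = a(i₀,i₀) < n_u(i₀)`. Since (b) contradicts (a) at `i₀`, exactly one
alternative holds.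
-/

open Function

lemma add_le_finsum {α M : Type*} [AddCommMonoid M] [PartialOrder M] [CanonicallyOrderedAdd M]
    {f : α → M} (hf : (support f).Finite) {x y : α} (hxy : x ≠ y) :
    f x + f y ≤ ∑ᶠ j, f j := by
  classical
  rw [finsum_eq_sum_of_support_subset f (s := {x, y} ∪ hf.toFinset)
    fun j hj => Finset.mem_union_right _ (hf.mem_toFinset.2 hj),
    ← Finset.sum_pair hxy]
  exact Finset.sum_le_sum_of_subset Finset.subset_union_left

section ReflectionSymmetric

variable {M : Type*} {a : ℤ × ℤ → M}
  (hsym : ∀ i j : ℤ, a (i, i + j) = a (i, i - j))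
include hsym

lemma apply_eq_apply_reflect (k i : ℤ) : a (k, i) = a (k, 2 * k - i) := by
  simpa [two_mul, add_sub_assoc] using (hsym k (k - i)).symm

variable [AddCommMonoid M] {i₀ : ℤ} (hup : ∀ k i : ℤ, k < i → i₀ < i → a (k, i) = 0)
include hup

lemma finsum_row_eq_diag {i : ℤ} (hi : i₀ ≤ i) : ∑ᶠ k, a (i, k) = a (i, i) := by
  refine finsum_eq_single _ i fun b hb => ?_
  rcases hb.lt_or_gt with hb | hb
  · rw [apply_eq_apply_reflect hsym]
    exact hup _ _ (by omega) (by omega)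
  · exact hup _ _ hb (by omega)

lemma finsum_col_eq_diag {i : ℤ} (hi : i₀ < i) : ∑ᶠ k, a (k, i) = a (i, i) := by
  refine finsum_eq_single (fun k => a (k, i)) i fun b hb => ?_
  rcases hb.lt_or_gt with hb | hb
  · exact hup _ _ hb hi
  · rw [apply_eq_apply_reflect hsym]
    exact hup _ _ (by omega) (by omega)

end ReflectionSymmetric

lemma exists_max_col_above_diag {M : Type*} [Zero M] {a : ℤ × ℤ → M}
    (hfin : (support a).Finite) (h : ∃ k i : ℤ, k < i ∧ a (k, i) ≠ 0) :
    ∃ k i₀ : ℤ, k < i₀ ∧ a (k, i₀) ≠ 0 ∧ ∀ k i : ℤ, k < i → i₀ < i → a (k, i) = 0 := by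
  obtain ⟨k, i, hki, hne⟩ := h
  obtain ⟨⟨k₀, i₀⟩, ⟨hne₀, hlt₀⟩, hmax⟩ :=
    Set.exists_max_image {p : ℤ × ℤ | a p ≠ 0 ∧ p.1 < p.2} Prod.snd
      (hfin.subset fun p hp => hp.1) ⟨(k, i), hne, hki⟩
  refine ⟨k₀, i₀, hlt₀, hne₀, fun k i hki hi => ?_⟩
  by_contra hne
  exact (hmax (k, i) ⟨hne, hki⟩).not_gt hi

/-- Property A: for a finitely supported a : ℤ × ℤ → ℕ with a(i, i+j) = a(i, i−j),
writing n_v(i) = Σ_k a(i,k) (row sums) and n_u(i) = Σ_k a(k,i) (column sums), exactly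
one holds: (a) n_u(i) = a(i,i) = n_v(i) for all i, or (b) there is i₀ with
n_u(i) = n_v(i) for all i > i₀ and n_u(i₀) > n_v(i₀). -/
theorem stmt_9 (a : ℤ × ℤ → ℕ) (hfin : (Function.support a).Finite)
    (hsym : ∀ i j : ℤ, a (i, i + j) = a (i, i - j)) :
    Xor'
      (∀ i : ℤ, (∑ᶠ k : ℤ, a (k, i)) = a (i, i) ∧ a (i, i) = ∑ᶠ k : ℤ, a (i, k))
      (∃ i₀ : ℤ, (∀ i : ℤ, i₀ < i → (∑ᶠ k : ℤ, a (k, i)) = ∑ᶠ k : ℤ, a (i, k)) ∧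
        (∑ᶠ k : ℤ, a (i₀, k)) < ∑ᶠ k : ℤ, a (k, i₀)) := by
  by_cases habove : ∃ k i : ℤ, k < i ∧ a (k, i) ≠ 0
  · obtain ⟨k, i₀, hk, hne, hup⟩ := exists_max_col_above_diag hfin habove
    have hcol_fin : (support fun j => a (j, i₀)).Finite :=
      hfin.preimage (Prod.mk_left_injective i₀).injOn
    have hlt : ∑ᶠ j, a (i₀, j) < ∑ᶠ j, a (j, i₀) := by
      rw [finsum_row_eq_diag hsym hup le_rfl]
      exact (Nat.lt_add_of_pos_left (Nat.pos_of_ne_zero hne)).trans_le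
        (add_le_finsum hcol_fin hk.ne)
    refine Or.inr ⟨⟨i₀, fun i hi => ?_, hlt⟩, fun hdiag => ?_⟩
    · rw [finsum_col_eq_diag hsym hup hi, finsum_row_eq_diag hsym hup hi.le]
    · obtain ⟨hcol, hrow⟩ := hdiag i₀
      omega
  · push Not at habove
    have hdiag (i : ℤ) : (∑ᶠ k, a (k, i)) = a (i, i) ∧ a (i, i) = ∑ᶠ k, a (i, k) :=
      ⟨finsum_col_eq_diag (i₀ := i - 1) hsym (fun k i h _ => habove k i h) (by omega),
        (finsum_row_eq_diag (i₀ := i) hsym (fun k i h _ => habove k i h) le_rfl).symm⟩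
    refine Or.inl ⟨hdiag, fun ⟨i₀, _, hlt⟩ => ?_⟩
    obtain ⟨hcol, hrow⟩ := hdiag i₀
    omega
end
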